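/- For any graph G and any l ≥ 0, the alternating sum of ranks of the magnitude homology groups equals the l-th coefficient of the magnitude: ∑_{k≥0} (−1)^k · rank(MH_{k,l}(G)) = ∑_{k≥0} (−1)^k · |{(x_0,…,x_k) ∈ V(G)^{k+1} : x_i ≠ x_{i+1} for all i, ℓ(x_0,…,x_k) = l}| = c_l(G). (Both sums are finite, since the terms vanish for k > l.) Equivalently, the graded Euler characteristic of magnitude homology is the magnitude power series #G = ∑_l c_l(G) q^l. -/

import Mathlib

/-!
Every step of a tuple in `MC_{k,l}(G)` has length at least one, so the chain complex
`MC_{*,l}(G)` consists of free abelian groups of finite rank and vanishes above degree `l`.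
Rank–nullity for `∂` and for cycles modulo boundaries then turn the alternating sum of the ranks
of homology into the alternating sum of the ranks of the chain groups, which is `c_l(G)`.

The substantial input is `∂ ∘ ∂ = 0`. By the triangle inequality deleting an interior vertex never
increases the length, and a tuple shorter than `l` stays shorter under further deletions, so
`∂ ∘ ∂` is the full alternating sum over ordered pairs of deleted positions; the terms cancel in
pairs by the simplicial identity for deleting two entries in either order.
-/

noncomputable section

namespace MagnitudeHomology

open Classical

variable {V : Type*} {W : Type*}

/-- The length `ℓ(x₀,…,x_k)` of a tuple of vertices: the sum of consecutive
(extended) shortest-path distances. -/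
def tupleLen (G : SimpleGraph V) {k : ℕ} (x : Fin (k + 1) → V) : ℕ∞ :=
  ∑ i : Fin k, G.edist (x i.castSucc) (x i.succ)

/-- The condition defining the generators of `MC_{k,l}(G)`: consecutive entries
distinct and total length `l`. -/
def IsMagTuple (G : SimpleGraph V) (l : ℕ) {k : ℕ} (x : Fin (k + 1) → V) : Prop :=
  (∀ i : Fin k, x i.castSucc ≠ x i.succ) ∧ tupleLen G x = (l : ℕ∞)

/-- The generating tuples of the magnitude chain group `MC_{k,l}(G)`. -/
def MagTuple (G : SimpleGraph V) (k l : ℕ) : Type _ :=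
  {x : Fin (k + 1) → V // IsMagTuple G l x}

/-- The magnitude chain group `MC_{k,l}(G)`: the free abelian group on tuples
`(x₀,…,x_k)` with consecutive entries distinct and length `l`. -/
def MC (G : SimpleGraph V) (k l : ℕ) : Type _ :=
  FreeAbelianGroup (MagTuple G k l)

instance (G : SimpleGraph V) (k l : ℕ) : AddCommGroup (MC G k l) :=
  inferInstanceAs (AddCommGroup (FreeAbelianGroup _))

/-- The generator of `MC_{k,l}(G)` corresponding to a tuple, or `0` if the tuple
does not satisfy the defining conditions. -/
def mcGen (G : SimpleGraph V) {k : ℕ} (l : ℕ) (x : Fin (k + 1) → V) : MC G k l :=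
  if h : IsMagTuple G l x then FreeAbelianGroup.of (⟨x, h⟩ : MagTuple G k l) else 0

/-- The magnitude differential `∂ = ∑_{i=1}^{k} (-1)^i ∂_i : MC_{k+1,l}(G) → MC_{k,l}(G)`,
where `∂_i` omits the `i`-th entry if this preserves the length, and is `0` otherwise. -/
def magDiff (G : SimpleGraph V) (k l : ℕ) : MC G (k + 1) l →+ MC G k l :=
  FreeAbelianGroup.lift fun (x : MagTuple G (k + 1) l) =>
    ∑ i : Fin k, ((-1 : ℤ) ^ ((i : ℕ) + 1)) •
      mcGen G l (x.1 ∘ Fin.succAbove i.succ.castSucc)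

/-- The subgroup of cycles: everything in degree `0`, the kernel of `∂` in
positive degrees. -/
def magCycles (G : SimpleGraph V) (l : ℕ) : (k : ℕ) → AddSubgroup (MC G k l)
  | 0 => ⊤
  | (k + 1) => (magDiff G k l).ker

/-- The boundaries, viewed as a subgroup of the cycles. -/
def magBoundaries (G : SimpleGraph V) (k l : ℕ) : AddSubgroup (magCycles G l k) :=
  ((magDiff G k l).range).addSubgroupOf (magCycles G l k)

/-- Magnitude homology `MH_{k,l}(G) = H_k(MC_{*,l}(G))`. -/
def MH (G : SimpleGraph V) (k l : ℕ) : Type _ :=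
  magCycles G l k ⧸ magBoundaries G k l

instance (G : SimpleGraph V) (k l : ℕ) : AddCommGroup (MH G k l) :=
  inferInstanceAs (AddCommGroup (_ ⧸ _))

/-- The homology class of a chain: its class if it is a cycle, `0` otherwise. -/
def mkMH (G : SimpleGraph V) (k l : ℕ) (z : MC G k l) : MH G k l :=
  if h : z ∈ magCycles G l k then QuotientAddGroup.mk ⟨z, h⟩ else 0

/-- The `l`-th coefficient `c_l(G)` of the magnitude power series `#G`. -/
def magCoeff (G : SimpleGraph V) (l : ℕ) : ℤ :=
  ∑ k ∈ Finset.range (l + 1), (-1 : ℤ) ^ k * (Nat.card (MagTuple G k l) : ℤ)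

open Finset Module

instance _root_.AddSubgroup.moduleFinite_int {A : Type*} [AddCommGroup A] [Module.Finite ℤ A]
    (K : AddSubgroup A) : Module.Finite ℤ K :=
  inferInstanceAs (Module.Finite ℤ (AddSubgroup.toIntSubmodule K))

theorem _root_.QuotientAddGroup.finrank_quotient_add_finrank {A : Type*} [AddCommGroup A]
    [Module.Finite ℤ A] (H : AddSubgroup A) :
    finrank ℤ (A ⧸ H) + finrank ℤ H = finrank ℤ A :=
  (AddSubgroup.toIntSubmodule H).finrank_quotient_add_finrank

theorem _root_.AddMonoidHom.finrank_range_add_finrank_ker {A B : Type*} [AddCommGroup A]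
    [AddCommGroup B] [Module.Finite ℤ A] (f : A →+ B) :
    finrank ℤ f.range + finrank ℤ f.ker = finrank ℤ A := by
  rw [← (QuotientAddGroup.quotientKerEquivRange f).toIntLinearEquiv.finrank_eq]
  exact QuotientAddGroup.finrank_quotient_add_finrank f.ker

theorem _root_.FreeAbelianGroup.finrank_eq_nat_card (α : Type*) :
    finrank ℤ (FreeAbelianGroup α) = Nat.card α :=
  finrank_eq_nat_card_basis (FreeAbelianGroup.basis α)

/-- The terms `(i + 1, j)` and `(j, i)` with `j ≤ i` cancel in pairs. -/
theorem _root_.Fin.sum_sum_neg_one_pow_smul_eq_zero {M : Type*} [AddCommGroup M] {k : ℕ}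
    (f : Fin (k + 1) → Fin k → M) (hf : ∀ i j : Fin k, j ≤ i → f i.succ j = f j.castSucc i) :
    ∑ i : Fin (k + 1), ∑ j : Fin k, (-1 : ℤ) ^ ((i : ℕ) + j) • f i j = 0 := by
  set g : Fin (k + 1) → Fin k → M := fun i j => (-1 : ℤ) ^ ((i : ℕ) + j) • f i j
  have hsplit : ∀ i j, g i j = (if j.castSucc < i then g i j else 0)
      + (if i ≤ j.castSucc then g i j else 0) := fun i j => by
    rcases lt_or_ge j.castSucc i with h | h
    · simp [h, not_le.mpr h]
    · simp [h, not_lt.mpr h]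
  have hlower : ∑ i, ∑ j, (if j.castSucc < i then g i j else 0)
      = ∑ i : Fin k, ∑ j : Fin k, if j ≤ i then g i.succ j else 0 := by
    simp [Fin.sum_univ_succ, Fin.castSucc_lt_succ_iff]
  have hupper : ∑ i, ∑ j, (if i ≤ j.castSucc then g i j else 0)
      = ∑ i : Fin k, ∑ j : Fin k, if j ≤ i then g j.castSucc i else 0 := by
    rw [Finset.sum_comm]
    simp [Fin.sum_univ_castSucc]
  have hcancel : ∀ i j : Fin k, j ≤ i → g i.succ j + g j.castSucc i = 0 := fun i j hji => by
    simp only [g, hf i j hji, Fin.val_succ, Fin.val_castSucc, pow_succ, add_right_comm _ 1,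
      add_comm (j : ℕ), mul_neg_one, neg_smul, neg_add_cancel]
  calc ∑ i, ∑ j, g i j
      = ∑ i, ∑ j, ((if j.castSucc < i then g i j else 0)
          + (if i ≤ j.castSucc then g i j else 0)) :=
        Finset.sum_congr rfl fun i _ => Finset.sum_congr rfl fun j _ => hsplit i j
    _ = ∑ i : Fin k, ∑ j : Fin k, ((if j ≤ i then g i.succ j else 0)
          + (if j ≤ i then g j.castSucc i else 0)) := by
        simp only [Finset.sum_add_distrib, hlower, hupper]
    _ = 0 := Finset.sum_eq_zero fun i _ => Finset.sum_eq_zero fun j _ => by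
        split_ifs with hji
        · exact hcancel i j hji
        · exact add_zero 0

/-- Read `h k`, `z k`, `c k` as the ranks of homology, cycles and chains in degree `k`, and `b k`
as the rank of the image of the differential out of degree `k + 1`. -/
theorem sum_range_neg_one_pow_mul_eq_of_rank_nullity (h z b c : ℕ → ℤ)
    (hz : ∀ k, h k + b k = z k) (hc₀ : c 0 = z 0) (hc : ∀ k, c (k + 1) = z (k + 1) + b k)
    (n : ℕ) :
    ∑ k ∈ range (n + 1), (-1) ^ k * h k
      = ∑ k ∈ range (n + 1), (-1) ^ k * c k - (-1) ^ n * b n := by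
  induction n with
  | zero => simp [hc₀, ← hz 0]
  | succ n ih =>
    rw [sum_range_succ, ih, sum_range_succ _ (n + 1), hc, ← hz (n + 1), pow_succ]
    ring

lemma succAbove_succ_eq_succAbove_castSucc {n : ℕ} {i m : Fin n} (h : m ≠ i) :
    i.succ.succAbove m = i.castSucc.succAbove m := by
  rcases h.lt_or_gt with h | h
  · rw [Fin.succAbove_of_castSucc_lt _ _ (Fin.castSucc_lt_succ_iff.mpr h.le),
      Fin.succAbove_of_castSucc_lt _ _ (Fin.castSucc_lt_castSucc_iff.mpr h)]
  · rw [Fin.succAbove_of_le_castSucc _ _ (Fin.succ_le_castSucc_iff.mpr h),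
      Fin.succAbove_of_le_castSucc _ _ (Fin.castSucc_le_castSucc_iff.mpr h.le)]

section removeNth

variable {n : ℕ} (x : Fin (n + 2) → V) (i : Fin n)

lemma removeNth_castSucc_self :
    Fin.removeNth i.succ.castSucc x i.castSucc = x i.castSucc.castSucc :=
  congrArg x (Fin.succAbove_castSucc_of_lt _ _ (by simp))

lemma removeNth_succ_self : Fin.removeNth i.succ.castSucc x i.succ = x i.succ.succ :=
  congrArg x (Fin.succAbove_of_le_castSucc _ _ le_rfl)

lemma removeNth_castSucc_of_ne {m : Fin n} (h : m ≠ i) :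
    Fin.removeNth i.succ.castSucc x m.castSucc = x (i.castSucc.succAbove m).castSucc := by
  rw [Fin.removeNth_apply, Fin.castSucc_succAbove_castSucc (i := i.succ),
    succAbove_succ_eq_succAbove_castSucc h]

lemma removeNth_succ (m : Fin n) :
    Fin.removeNth i.succ.castSucc x m.succ = x (i.castSucc.succAbove m).succ := by
  rw [Fin.removeNth_apply, ← Fin.succ_castSucc, Fin.succ_succAbove_succ]

end removeNth

variable (G : SimpleGraph V)

lemma tupleLen_removeNth_add {n : ℕ} (x : Fin (n + 2) → V) (i : Fin n) :
    tupleLen G (Fin.removeNth i.succ.castSucc x)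
      + (G.edist (x i.castSucc.castSucc) (x i.succ.castSucc)
        + G.edist (x i.succ.castSucc) (x i.succ.succ))
      = tupleLen G x + G.edist (x i.castSucc.castSucc) (x i.succ.succ) := by
  set y := Fin.removeNth i.succ.castSucc x
  set e : Fin (n + 1) → ℕ∞ := fun m => G.edist (x m.castSucc) (x m.succ)
  set e' : Fin n → ℕ∞ := fun m => G.edist (y m.castSucc) (y m.succ)
  have hx : tupleLen G x = e i.castSucc + ∑ m, e (i.castSucc.succAbove m) :=
    Fin.sum_univ_succAbove e i.castSucc
  have hy :
      tupleLen G y + e (i.castSucc.succAbove i) = ∑ m, e (i.castSucc.succAbove m) + e' i := by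
    rw [tupleLen, ← add_sum_erase _ _ (mem_univ i), ← add_sum_erase _ _ (mem_univ i),
      sum_congr rfl fun m hm => show e' m = e (i.castSucc.succAbove m) by
        simp only [e', e, y, removeNth_castSucc_of_ne x i (ne_of_mem_erase hm), removeNth_succ]]
    ring
  have he : e (i.castSucc.succAbove i) = G.edist (x i.succ.castSucc) (x i.succ.succ) := by
    simp only [e, Fin.succAbove_castSucc_self]
  have he' : e' i = G.edist (x i.castSucc.castSucc) (x i.succ.succ) := by
    simp only [e', y, removeNth_castSucc_self, removeNth_succ_self]
  have hc : e i.castSucc = G.edist (x i.castSucc.castSucc) (x i.succ.castSucc) := by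
    simp only [e, Fin.succ_castSucc]
  rw [hx, ← he, ← he', ← hc, add_comm (e _), ← add_assoc, hy]
  ring

lemma edist_le_tupleLen {n : ℕ} (x : Fin (n + 1) → V) (m : Fin n) :
    G.edist (x m.castSucc) (x m.succ) ≤ tupleLen G x :=
  single_le_sum (f := fun m : Fin n => G.edist (x m.castSucc) (x m.succ)) (fun _ _ => zero_le)
    (mem_univ m)

lemma tupleLen_removeNth_le {n : ℕ} (x : Fin (n + 2) → V) (i : Fin n) :
    tupleLen G (Fin.removeNth i.succ.castSucc x) ≤ tupleLen G x := by
  by_cases hx : tupleLen G x = ⊤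
  · exact hx ▸ le_top
  have hs : G.edist (x i.castSucc.castSucc) (x i.succ.castSucc)
      + G.edist (x i.succ.castSucc) (x i.succ.succ) ≠ ⊤ := by
    have h₁ := edist_le_tupleLen G x i.castSucc
    have h₂ := edist_le_tupleLen G x i.succ
    rw [Fin.succ_castSucc] at h₁
    exact WithTop.add_ne_top.mpr ⟨ne_top_of_le_ne_top hx h₁, ne_top_of_le_ne_top hx h₂⟩
  refine (ENat.add_le_add_iff_right hs).mp ?_
  rw [tupleLen_removeNth_add]
  gcongr
  exact SimpleGraph.edist_triangle

/-- If deleting `x (i + 1)` keeps the length, that vertex lies on a geodesic from `x i` to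
`x (i + 2)`, so `x i = x (i + 2)` would force `x i = x (i + 1)`. -/
lemma isMagTuple_removeNth {l n : ℕ} {x : Fin (n + 2) → V} (hx : IsMagTuple G l x) (i : Fin n)
    (hl : tupleLen G (Fin.removeNth i.succ.castSucc x) = l) :
    IsMagTuple G l (Fin.removeNth i.succ.castSucc x) := by
  refine ⟨fun m => ?_, hl⟩
  by_cases hm : m = i
  · subst hm
    rw [removeNth_castSucc_self, removeNth_succ_self]
    intro heq
    have ht : G.edist (x m.castSucc.castSucc) (x m.succ.succ) = 0 := by
      rw [heq, SimpleGraph.edist_self]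
    have hsum := tupleLen_removeNth_add G x m
    rw [hl, hx.2, ht, add_zero] at hsum
    have h0 := (add_eq_zero.mp (WithTop.add_left_cancel (ENat.natCast_ne_top l)
      (hsum.trans (add_zero _).symm))).1
    have hstep := SimpleGraph.edist_eq_zero_iff.mp h0
    rw [← Fin.succ_castSucc] at hstep
    exact hx.1 m.castSucc hstep
  · rw [removeNth_castSucc_of_ne x i hm, removeNth_succ]
    exact hx.1 _

lemma removeNth_removeNth_of_le {α : Type*} {n : ℕ} (x : Fin (n + 3) → α) {i j : Fin n}
    (hji : j ≤ i) :
    Fin.removeNth j.succ.castSucc (Fin.removeNth i.succ.succ.castSucc x)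
      = Fin.removeNth i.succ.castSucc (Fin.removeNth j.castSucc.succ.castSucc x) := by
  funext m
  simp only [Fin.removeNth]
  congr 1
  rw [Fin.le_def] at hji
  ext
  simp only [Fin.succAbove, Fin.lt_def, Fin.val_castSucc, Fin.val_succ]
  split_ifs <;> simp only [Fin.val_castSucc, Fin.val_succ] at * <;> omega

lemma mcGen_of_tupleLen_ne {k l : ℕ} {y : Fin (k + 1) → V} (h : tupleLen G y ≠ l) :
    mcGen G l y = 0 :=
  dif_neg fun hy => h hy.2

lemma mcGen_of_isMagTuple {k l : ℕ} {y : Fin (k + 1) → V} (h : IsMagTuple G l y) :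
    mcGen G l y = FreeAbelianGroup.of ⟨y, h⟩ :=
  dif_pos h

lemma magDiff_of {k l : ℕ} (x : MagTuple G (k + 1) l) :
    magDiff G k l (FreeAbelianGroup.of x)
      = ∑ i : Fin k, (-1 : ℤ) ^ ((i : ℕ) + 1) • mcGen G l (Fin.removeNth i.succ.castSucc x.1) :=
  FreeAbelianGroup.lift_apply_of _ _

lemma magDiff_mcGen {k l : ℕ} {y : Fin (k + 2) → V}
    (hy : tupleLen G y < l ∨ IsMagTuple G l y) :
    magDiff G k l (mcGen G l y)
      = ∑ i : Fin k, (-1 : ℤ) ^ ((i : ℕ) + 1) • mcGen G l (Fin.removeNth i.succ.castSucc y) := by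
  rcases hy with hlt | hy
  · rw [mcGen_of_tupleLen_ne G hlt.ne, map_zero]
    refine (sum_eq_zero fun i _ => ?_).symm
    rw [mcGen_of_tupleLen_ne G ((tupleLen_removeNth_le G y i).trans_lt hlt).ne, smul_zero]
  · rw [mcGen_of_isMagTuple G hy]
    exact magDiff_of G ⟨y, hy⟩

lemma magDiff_comp_magDiff (k l : ℕ) : (magDiff G k l).comp (magDiff G (k + 1) l) = 0 := by
  refine FreeAbelianGroup.lift_ext _ _ fun x => ?_
  change magDiff G k l (magDiff G (k + 1) l (FreeAbelianGroup.of x)) = 0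
  have hface : ∀ i : Fin (k + 1), tupleLen G (Fin.removeNth i.succ.castSucc x.1) < l
      ∨ IsMagTuple G l (Fin.removeNth i.succ.castSucc x.1) := fun i =>
    ((tupleLen_removeNth_le G x.1 i).trans_eq x.2.2).lt_or_eq.imp_right
      (isMagTuple_removeNth G x.2 i)
  have hsign : ∀ a b : ℕ, (-1 : ℤ) ^ (a + 1 + (b + 1)) = (-1) ^ (a + b) := fun a b => by
    rw [show a + 1 + (b + 1) = a + b + 2 by ring, pow_add, neg_one_sq, mul_one]
  simp only [magDiff_of, map_sum, map_zsmul, magDiff_mcGen G (hface _), smul_sum, smul_smul,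
    ← pow_add, hsign]
  exact Fin.sum_sum_neg_one_pow_smul_eq_zero _ fun i j hji => by
    rw [removeNth_removeNth_of_le x.1 hji]

instance [Finite V] (G : SimpleGraph V) (k l : ℕ) : Module.Finite ℤ (MC G k l) :=
  inferInstanceAs
    (Module.Finite ℤ (FreeAbelianGroup {x : Fin (k + 1) → V // IsMagTuple G l x}))

lemma finrank_MC (k l : ℕ) : finrank ℤ (MC G k l) = Nat.card (MagTuple G k l) :=
  FreeAbelianGroup.finrank_eq_nat_card _

lemma range_magDiff_le_magCycles (k l : ℕ) : (magDiff G k l).range ≤ magCycles G l k := by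
  cases k with
  | zero => exact le_top
  | succ k =>
    rintro _ ⟨c, rfl⟩
    exact DFunLike.congr_fun (magDiff_comp_magDiff G k l) c

lemma le_tupleLen {k : ℕ} {x : Fin (k + 1) → V} (hx : ∀ i : Fin k, x i.castSucc ≠ x i.succ) :
    (k : ℕ∞) ≤ tupleLen G x :=
  calc (k : ℕ∞) = ∑ _ : Fin k, 1 := by simp
    _ ≤ tupleLen G x := sum_le_sum fun m _ =>
      Order.one_le_iff_ne_zero.mpr fun h => hx m (SimpleGraph.edist_eq_zero_iff.mp h)

lemma isEmpty_magTuple {k l : ℕ} (h : l < k) : IsEmpty (MagTuple G k l) :=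
  ⟨fun x => h.not_ge (by exact_mod_cast (le_tupleLen G x.2.1).trans_eq x.2.2)⟩

lemma finrank_magCycles_zero (l : ℕ) : finrank ℤ (magCycles G l 0) = finrank ℤ (MC G 0 l) :=
  (AddSubgroup.topEquiv (G := MC G 0 l)).toIntLinearEquiv.finrank_eq

section Finite

variable [Finite V]

lemma finrank_MH_add_finrank_range (k l : ℕ) :
    finrank ℤ (MH G k l) + finrank ℤ (magDiff G k l).range = finrank ℤ (magCycles G l k) := by
  rw [← (AddSubgroup.addSubgroupOfEquivOfLe
    (range_magDiff_le_magCycles G k l)).toIntLinearEquiv.finrank_eq]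
  exact QuotientAddGroup.finrank_quotient_add_finrank _

lemma finrank_magCycles_add_finrank_range (k l : ℕ) :
    finrank ℤ (magCycles G l (k + 1)) + finrank ℤ (magDiff G k l).range
      = finrank ℤ (MC G (k + 1) l) := by
  rw [add_comm]
  exact (magDiff G k l).finrank_range_add_finrank_ker

lemma finrank_range_magDiff_self (l : ℕ) : finrank ℤ (magDiff G l l).range = 0 := by
  have : IsEmpty (MagTuple G (l + 1) l) := isEmpty_magTuple G l.lt_succ_self
  have h := (magDiff G l l).finrank_range_add_finrank_ker
  rw [finrank_MC, Nat.card_of_isEmpty] at h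
  omega

end Finite

/-- For any finite graph `G` and any `l ≥ 0`, the alternating sum of
the ranks of the magnitude homology groups equals the `l`-th coefficient of the
magnitude: `∑_{k} (-1)^k · rank MH_{k,l}(G) = c_l(G)` (both sums are finite, the
terms vanishing for `k > l`); i.e. the graded Euler characteristic of magnitude
homology is the magnitude `#G`. -/
theorem euler_characteristic {V : Type*} [Fintype V] (G : SimpleGraph V) (l : ℕ) :
    ∑ k ∈ Finset.range (l + 1), (-1 : ℤ) ^ k * (Module.finrank ℤ (MH G k l) : ℤ) =
      magCoeff G l := by
  have h := sum_range_neg_one_pow_mul_eq_of_rank_nullity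
    (fun k => finrank ℤ (MH G k l)) (fun k => finrank ℤ (magCycles G l k))
    (fun k => finrank ℤ (magDiff G k l).range) (fun k => finrank ℤ (MC G k l))
    (fun k => by exact_mod_cast finrank_MH_add_finrank_range G k l)
    (by exact_mod_cast (finrank_magCycles_zero G l).symm)
    (fun k => by exact_mod_cast (finrank_magCycles_add_finrank_range G k l).symm) l
  simpa only [finrank_range_magDiff_self, finrank_MC, Nat.cast_zero, mul_zero, sub_zero,
    magCoeff] using h

end MagnitudeHomology
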